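/- arXiv:2407.20718 — 4 statements merged into one kernel-verified Lean document; each statement's English description precedes it below -/
import Mathlib

section
/- (Weighted Dynkin–Specht–Wever lemma in the universal enveloping algebra of a graded Lie algebra.) Let K be a commutative ring which is a ℚ-algebra and g a Lie algebra over K equipped with a K-grading: a family of K-submodules G(k) (k ∈ K) of g which form an internal direct sum decomposition of g and satisfy ⁅G(i), G(j)⁆ ⊆ G(i+j) for all i, j ∈ K. Let T := ⨁_{n∈ℕ} ⨂^n g and let m : T → U(g) be the K-linear map restricting to m_n on each summand. Let W ⊆ T be a K-submodule such that: (i) for every n and every permutation σ of {1,…,n}, the map acting as P_σ on the n-th summand and as the identity on all other summands sends W into W; and (ii) for every n, every position j ∈ {1,…,n} and every k ∈ K, the map acting on the n-th summand by applying in the j-th tensor factor the projection of g onto G(k) coming from the internal direct sum decomposition (and the identity in all other factors and on all other summands) sends W into W. Suppose the restriction of m to W is injective. Let F be a finite index set and for each f ∈ F let n_f ≥ 1, let w_{1,f},…,w_{n_f,f} ∈ K and a_{i,f} ∈ G(w_{i,f}) for i ∈ {1,…,n_f}; set P := ∑_{f∈F} a_{1,f} ⊗ ⋯ ⊗ a_{n_f,f}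 ∈ T (each pure tensor lying in the summand of degree n_f). If P ∈ W and m(P) lies in the range of ιU, then ∑_{f∈F} (w_{1,f}+⋯+w_{n_f,f}) • m_{n_f}(a_{1,f} ⊗ ⋯ ⊗ a_{n_f,f}) = ιU( ∑_{f∈F} [a_{1,f},…,a_{n_f−1,f}, w_{n_f,f} • a_{n_f,f}]_L ), the bracket expression being w_{1,f} • a_{1,f} when n_f = 1. -/
/-- Left-iterated Lie bracket `[a₁, …, a_n]_L = ⁅a₁, ⁅a₂, …, ⁅a_{n-1}, a_n⁆…⁆⁆`
(equal to `a₁` for a singleton list, and `0` for the empty list). -/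
def bracketL {L : Type*} [LieRing L] : List L → L
  | [] => 0
  | [z] => z
  | z :: w :: ws => ⁅z, bracketL (w :: ws)⁆

attribute [local instance] LieRing.ofAssociativeRing

/-- The multiplication map `m_n : ⨂ⁿ g → U(g)`, `a₁ ⊗ ⋯ ⊗ a_n ↦ ιU(a₁) ⋯ ιU(a_n)`. -/
noncomputable def mpow (K : Type*) [CommRing K] (g : Type*) [LieRing g] [LieAlgebra K g]
    (n : ℕ) : TensorPower K n g →ₗ[K] UniversalEnvelopingAlgebra K g :=
  PiTensorProduct.lift
    ((MultilinearMap.mkPiAlgebraFin K n (UniversalEnvelopingAlgebra K g)).compLinearMap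
      fun _ => (UniversalEnvelopingAlgebra.ι K).toLinearMap)

/-- The permutation action `P_σ : ⨂ⁿ g → ⨂ⁿ g`, `a₁ ⊗ ⋯ ⊗ a_n ↦ a_{σ(1)} ⊗ ⋯ ⊗ a_{σ(n)}`. -/
noncomputable def permMap (K : Type*) [CommRing K] (g : Type*) [LieRing g] [LieAlgebra K g]
    (n : ℕ) (σ : Equiv.Perm (Fin n)) : TensorPower K n g →ₗ[K] TensorPower K n g :=
  (PiTensorProduct.reindex K (fun _ : Fin n => g) σ).toLinearMap

/-- The total multiplication map `m : ⨁ₙ ⨂ⁿ g → U(g)` restricting to `m_n` on each summand. -/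
noncomputable def mtot (K : Type*) [CommRing K] (g : Type*) [LieRing g] [LieAlgebra K g] :
    (DirectSum ℕ fun n => TensorPower K n g) →ₗ[K] UniversalEnvelopingAlgebra K g :=
  DirectSum.toModule K ℕ (UniversalEnvelopingAlgebra K g) fun n => mpow K g n

/-- The endomorphism of `⨁ₙ ⨂ⁿ g` acting by `f` on the `n`-th summand and by the identity
on all other summands. -/
noncomputable def onSummand (K : Type*) [CommRing K] (g : Type*) [LieRing g] [LieAlgebra K g]
    (n : ℕ) (f : TensorPower K n g →ₗ[K] TensorPower K n g)
    (x : DirectSum ℕ fun m => TensorPower K m g) :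
    DirectSum ℕ fun m => TensorPower K m g :=
  x + DirectSum.lof K ℕ (fun m => TensorPower K m g) n (f (x n) - x n)

/-- The projection of `g` onto the graded piece `G k` coming from the internal direct sum
decomposition `hG`. -/
noncomputable def gradeProj (K : Type*) [CommRing K] [DecidableEq K]
    (g : Type*) [LieRing g] [LieAlgebra K g]
    (G : K → Submodule K g) (hG : DirectSum.IsInternal G) (k : K) : g →ₗ[K] g :=
  (G k).subtype ∘ₗ (DirectSum.component K K (fun i => G i) k) ∘ₗ
    (LinearEquiv.ofBijective (DirectSum.coeLinearMap G) hG).symm.toLinearMap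


/-! The grading defines a Lie derivation `D` of `g` acting on `G k` as multiplication by `k`, and
the argument works for any derivation having the `a f i` as eigenvectors. First, `D` extends to a
derivation of `U(g)`, namely the `ε`-part of the algebra map `U(g) → U(g)[ε]`,
`ι x ↦ ι x + ι (D x) ε`; it multiplies `ι a₁ ⋯ ι aₙ` by `w₁ + ⋯ + wₙ`. Second, letting `g` act on
`g ⋊ K D` by the adjoint action and evaluating the induced `U(g)`-action at `-D` gives a linear map
`β : U(g) → g` with `β (ι x) = D x` and `β (ι a₁ ⋯ ι aₙ) = [a₁, …, aₙ₋₁, D aₙ]_L`. If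
`m(P) = ι x`, applying the first map to this identity gives `ι (D x)` on the left-hand side of the
claim, and applying `β` computes `D x` as the sum of brackets. -/

open UniversalEnvelopingAlgebra TrivSqZeroExt

theorem mpow_tprod {K : Type*} [CommRing K] {g : Type*} [LieRing g] [LieAlgebra K g] {n : ℕ}
    (a : Fin n → g) :
    mpow K g n (PiTensorProduct.tprod K a) = (List.ofFn fun i => ι K (a i)).prod := by
  simp [mpow, MultilinearMap.mkPiAlgebraFin_apply]

namespace LieDerivation

variable {K : Type*} [CommRing K] {g : Type*} [LieRing g] [LieAlgebra K g]
  (D : LieDerivation K g g)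

noncomputable def toDualNumber : g →ₗ⁅K⁆ DualNumber (UniversalEnvelopingAlgebra K g) where
  toFun x := inl (ι K x) + inr (ι K (D x))
  map_add' x y := by ext <;> simp
  map_smul' c x := by ext <;> simp
  map_lie' {x y} := by
    have hι : ∀ u v : g, ι K ⁅u, v⁆ = ι K u * ι K v - ι K v * ι K u := fun u v => by
      rw [LieHom.map_lie, Ring.lie_def]
    ext
    · simp [Ring.lie_def]
    · simp only [Ring.lie_def, snd_sub, snd_mul, fst_add, snd_add, fst_inl, snd_inl, fst_inr,
        snd_inr, apply_lie_eq_sub, map_sub, hι, smul_eq_mul, op_smul_eq_mul]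
      noncomm_ring

/-- The pair `(z, c)` stands for `z - c D` in the Lie algebra `g ⋊ K D` obtained by adjoining `D`,
and `x` acts on it by `ad x`. -/
noncomputable def adjoinAction : g →ₗ⁅K⁆ Module.End K (g × K) where
  toFun x :=
    { toFun p := (⁅x, p.1⁆ + p.2 • D x, 0)
      map_add' p q := by ext <;> simp [add_smul, add_add_add_comm]
      map_smul' c p := by ext <;> simp [mul_smul] }
  map_add' x y := LinearMap.ext fun p => by ext <;> simp [add_add_add_comm]
  map_smul' c x := LinearMap.ext fun p => by ext <;> simp [smul_comm c]
  map_lie' {x y} := LinearMap.ext fun p => by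
    ext
    · simp only [Ring.lie_def, LinearMap.sub_apply, Module.End.mul_apply, LinearMap.coe_mk,
        AddHom.coe_mk, apply_lie_eq_sub, lie_lie, lie_add, lie_smul, zero_smul, add_zero,
        Prod.fst_sub, smul_sub]
      abel
    · simp [Ring.lie_def]

theorem lift_toDualNumber_prod_ofFn {n : ℕ} (a : Fin n → g) (w : Fin n → K)
    (hw : ∀ i, D (a i) = w i • a i) :
    lift K D.toDualNumber (List.ofFn fun i => ι K (a i)).prod =
      inl (List.ofFn fun i => ι K (a i)).prod +
        inr ((∑ i, w i) • (List.ofFn fun i => ι K (a i)).prod) := by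
  induction n with
  | zero => simp
  | succ n ih =>
    rw [List.ofFn_succ, List.prod_cons, map_mul, lift_ι_apply,
      ih (fun i => a i.succ) (fun i => w i.succ) (fun i => hw i.succ)]
    ext
    · simp [toDualNumber]
    · simp [toDualNumber, hw 0, Fin.sum_univ_succ, add_smul]
      abel

theorem lift_adjoinAction_prod_ofFn_succ {n : ℕ} (a : Fin (n + 1) → g) :
    lift K D.adjoinAction (List.ofFn fun i => ι K (a i)).prod (0, 1) =
      (bracketL (List.ofFn fun i => if (i : ℕ) = n then D (a i) else a i), 0) := by
  induction n with
  | zero => simp [adjoinAction, bracketL]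
  | succ n ih =>
    rw [List.ofFn_succ, List.prod_cons, map_mul, Module.End.mul_apply, lift_ι_apply,
      ih (fun i => a i.succ), List.ofFn_succ, List.ofFn_succ]
    simp [adjoinAction, bracketL, Fin.val_succ]

theorem fst_lift_adjoinAction_prod_ofFn {n : ℕ} (a : Fin n → g) :
    (lift K D.adjoinAction (List.ofFn fun i => ι K (a i)).prod (0, 1)).1 =
      bracketL (List.ofFn fun i => if (i : ℕ) = n - 1 then D (a i) else a i) := by
  cases n with
  | zero => simp [bracketL]
  | succ n => rw [lift_adjoinAction_prod_ofFn_succ, Nat.add_sub_cancel]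

theorem sum_smul_mpow_tprod_eq_ι {F : Type*} [Fintype F] {n : F → ℕ}
    (w : (f : F) → Fin (n f) → K) (a : (f : F) → Fin (n f) → g)
    (hw : ∀ f i, D (a f i) = w f i • a f i) {x : g}
    (hx : ∑ f, mpow K g (n f) (PiTensorProduct.tprod K (a f)) = ι K x) :
    ∑ f, (∑ i, w f i) • mpow K g (n f) (PiTensorProduct.tprod K (a f)) =
      ι K (∑ f, bracketL (List.ofFn fun i : Fin (n f) =>
        if (i : ℕ) = n f - 1 then D (a f i) else a f i)) := by
  have hDx : D x = ∑ f, bracketL (List.ofFn fun i : Fin (n f) =>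
      if (i : ℕ) = n f - 1 then D (a f i) else a f i) :=
    calc D x = (lift K D.adjoinAction (ι K x) (0, 1)).1 := by simp [adjoinAction]
      _ = _ := by
        simp only [← hx, map_sum, LinearMap.coe_sum, Finset.sum_apply, Prod.fst_sum, mpow_tprod,
          fst_lift_adjoinAction_prod_ofFn]
  calc ∑ f, (∑ i, w f i) • mpow K g (n f) (PiTensorProduct.tprod K (a f))
      = snd (lift K D.toDualNumber (∑ f, mpow K g (n f) (PiTensorProduct.tprod K (a f)))) := by
        rw [map_sum, snd_sum]
        refine Finset.sum_congr rfl fun f _ => ?_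
        rw [mpow_tprod, lift_toDualNumber_prod_ofFn D _ _ (hw f), snd_add, snd_inl, snd_inr,
          zero_add]
    _ = ι K (D x) := by simp [hx, toDualNumber]
    _ = _ := by rw [hDx]

end LieDerivation

@[elab_as_elim]
theorem DirectSum.IsInternal.induction_on {R ι M : Type*} [Semiring R] [AddCommMonoid M]
    [Module R M] [DecidableEq ι] {A : ι → Submodule R M} (h : DirectSum.IsInternal A)
    {motive : M → Prop} (x : M) (mem : ∀ i, ∀ x ∈ A i, motive x) (zero : motive 0)
    (add : ∀ x y, motive x → motive y → motive (x + y)) : motive x :=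
  Submodule.iSup_induction A (motive := motive) (h.submodule_iSup_eq_top ▸ Submodule.mem_top)
    mem zero add

section Grading

variable {K : Type*} [CommRing K] [DecidableEq K] {g : Type*} [LieRing g] [LieAlgebra K g]
  {G : K → Submodule K g}

noncomputable def gradingEnd (hG : DirectSum.IsInternal G) : Module.End K g :=
  DirectSum.toModule K K g (fun k => k • (G k).subtype) ∘ₗ
    (LinearEquiv.ofBijective (DirectSum.coeLinearMap G) hG).symm.toLinearMap

theorem gradingEnd_apply_of_mem (hG : DirectSum.IsInternal G) {k : K} {x : g} (hx : x ∈ G k) :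
    gradingEnd hG x = k • x := by
  have : (LinearEquiv.ofBijective (DirectSum.coeLinearMap G) hG).symm x
      = DirectSum.lof K K (fun i => G i) k ⟨x, hx⟩ :=
    (LinearEquiv.symm_apply_eq _).mpr (DirectSum.coeLinearMap_of G k ⟨x, hx⟩).symm
  simp [gradingEnd, this]

theorem gradingEnd_lie (hG : DirectSum.IsInternal G)
    (hGbr : ∀ i j : K, ∀ x ∈ G i, ∀ y ∈ G j, ⁅x, y⁆ ∈ G (i + j)) (x y : g) :
    gradingEnd hG ⁅x, y⁆ = ⁅x, gradingEnd hG y⁆ - ⁅y, gradingEnd hG x⁆ := by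
  induction x using hG.induction_on with
  | mem i x hx =>
    induction y using hG.induction_on with
    | mem j y hy =>
      rw [gradingEnd_apply_of_mem hG hx, gradingEnd_apply_of_mem hG hy,
        gradingEnd_apply_of_mem hG (hGbr i j x hx y hy), lie_smul, lie_smul, ← lie_skew y x,
        smul_neg, sub_neg_eq_add, add_smul, add_comm]
    | zero => simp
    | add y y' hy hy' => simp only [lie_add, add_lie, map_add, hy, hy']; abel
  | zero => simp
  | add x x' hx hx' => simp only [lie_add, add_lie, map_add, hx, hx']; abel

noncomputable def gradingDerivation (hG : DirectSum.IsInternal G)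
    (hGbr : ∀ i j : K, ∀ x ∈ G i, ∀ y ∈ G j, ⁅x, y⁆ ∈ G (i + j)) : LieDerivation K g g where
  toLinearMap := gradingEnd hG
  leibniz' := gradingEnd_lie hG hGbr

end Grading

theorem weighted_DSW_universal_enveloping_graded_general
    (K : Type*) [CommRing K] [DecidableEq K]
    (g : Type*) [LieRing g] [LieAlgebra K g]
    (G : K → Submodule K g) (hG : DirectSum.IsInternal G)
    (hGbr : ∀ i j : K, ∀ x ∈ G i, ∀ y ∈ G j, ⁅x, y⁆ ∈ G (i + j))
    (F : Type*) [Fintype F]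
    (n : F → ℕ)
    (wt : (f : F) → Fin (n f) → K)
    (a : (f : F) → Fin (n f) → g)
    (ha : ∀ f i, a f i ∈ G (wt f i))
    (P : DirectSum ℕ fun m => TensorPower K m g)
    (hPdef : P = ∑ f : F,
      DirectSum.lof K ℕ (fun m => TensorPower K m g) (n f) (PiTensorProduct.tprod K (a f)))
    (hPg : mtot K g P ∈ Set.range (UniversalEnvelopingAlgebra.ι K (L := g))) :
    ∑ f : F, (∑ i, wt f i) • mpow K g (n f) (PiTensorProduct.tprod K (a f)) =
      UniversalEnvelopingAlgebra.ι K
        (∑ f : F, bracketL (List.ofFn fun i : Fin (n f) =>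
          if (i : ℕ) = n f - 1 then wt f i • a f i else a f i)) := by
  obtain ⟨x, hx⟩ := hPg
  have hw (f i) : gradingDerivation hG hGbr (a f i) = wt f i • a f i :=
    gradingEnd_apply_of_mem hG (ha f i)
  have hmP : ∑ f, mpow K g (n f) (PiTensorProduct.tprod K (a f)) = ι K x := by
    simp [hx, hPdef, mtot]
  rw [(gradingDerivation hG hGbr).sum_smul_mpow_tprod_eq_ι wt a hw hmP]
  simp only [hw]

/-- (Weighted Dynkin–Specht–Wever lemma in the universal enveloping algebra of a graded Lie
algebra.) -/
theorem weighted_DSW_universal_enveloping_graded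
    (K : Type*) [CommRing K] [Algebra ℚ K] [DecidableEq K]
    (g : Type*) [LieRing g] [LieAlgebra K g]
    (G : K → Submodule K g) (hG : DirectSum.IsInternal G)
    (hGbr : ∀ i j : K, ∀ x ∈ G i, ∀ y ∈ G j, ⁅x, y⁆ ∈ G (i + j))
    (W : Submodule K (DirectSum ℕ fun n => TensorPower K n g))
    (hWperm : ∀ (n : ℕ) (σ : Equiv.Perm (Fin n)), ∀ x ∈ W,
      onSummand K g n (permMap K g n σ) x ∈ W)
    (hWproj : ∀ (n : ℕ) (j : Fin n) (k : K), ∀ x ∈ W,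
      onSummand K g n
        (PiTensorProduct.map fun i => if i = j then gradeProj K g G hG k else LinearMap.id)
        x ∈ W)
    (hinj : Set.InjOn (mtot K g) (W : Set (DirectSum ℕ fun n => TensorPower K n g)))
    (F : Type*) [Fintype F]
    (n : F → ℕ) (hn : ∀ f, 1 ≤ n f)
    (wt : (f : F) → Fin (n f) → K)
    (a : (f : F) → Fin (n f) → g)
    (ha : ∀ f i, a f i ∈ G (wt f i))
    (P : DirectSum ℕ fun m => TensorPower K m g)
    (hPdef : P = ∑ f : F,
      DirectSum.lof K ℕ (fun m => TensorPower K m g) (n f) (PiTensorProduct.tprod K (a f)))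
    (hPW : P ∈ W)
    (hPg : mtot K g P ∈ Set.range (UniversalEnvelopingAlgebra.ι K (L := g))) :
    ∑ f : F, (∑ i, wt f i) • mpow K g (n f) (PiTensorProduct.tprod K (a f)) =
      UniversalEnvelopingAlgebra.ι K
        (∑ f : F, bracketL (List.ofFn fun i : Fin (n f) =>
          if (i : ℕ) = n f - 1 then wt f i • a f i else a f i)) :=
  weighted_DSW_universal_enveloping_graded_general K g G hG hGbr F n wt a ha P hPdef hPg
end

section
/- (Magnus–Witt theorem over ℚ-algebras.) Let K be a commutative ring which is a ℚ-algebra and Λ a type. Then the canonical Lie algebra morphism ι : FreeLieAlgebra K Λ → FreeAlgebra K Λ, where FreeAlgebra K Λ carries the commutator Lie bracket ⁅a,b⁆ = a*b − b*a and ι sends each generator of the free Lie algebra to the corresponding generator of the free associative algebra, is injective. -/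
attribute [local instance 100] LieRing.ofAssociativeRing

/-- The canonical Lie algebra morphism from the free Lie algebra to the free associative
algebra (with commutator bracket), sending each generator to the corresponding generator. -/
noncomputable def iotaLie (K : Type*) [CommRing K] (Λ : Type*) :
    FreeLieAlgebra K Λ →ₗ⁅K⁆ FreeAlgebra K Λ :=
  FreeLieAlgebra.lift K (FreeAlgebra.ι K)

/-!
Let `A` be the free algebra and `L` the free Lie algebra. The Dynkin map `D : A → L` sends a
word `x₁ ⋯ xₙ` to the right-normed bracket `⁅x₁, ⁅x₂, …, xₙ⁆⁆`; it satisfies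
`D (a * b) = ε b • D a + a • D b`, where `ε` is the counit and `A` acts on `L` through `ad`.
For Lie elements this gives `D (ι ⁅u, v⁆) = ⁅u, D (ι v)⁆ - ⁅v, D (ι u)⁆`, and hence
`D (ι u) = n • u` whenever `u` is a bracket of `n` generators (Dynkin–Specht–Wever).
Every `u ∈ L` is a sum of such homogeneous pieces `uₙ` with `n ≥ 1`. If `ι u = 0`, then each
`ι uₙ = 0`, because the grading of `A` by word length is direct; so `n • uₙ = D (ι uₙ) = 0`,
and `uₙ = 0` because `n` is invertible in the `ℚ`-algebra `K`.
-/

open FreeLieAlgebra LieAlgebra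

theorem FreeLieAlgebra.lieSpan_range_of (R X : Type*) [CommRing R] :
    LieSubalgebra.lieSpan R (FreeLieAlgebra R X) (Set.range (of R)) = ⊤ := by
  set S := LieSubalgebra.lieSpan R (FreeLieAlgebra R X) (Set.range (of R))
  let g : FreeLieAlgebra R X →ₗ⁅R⁆ S :=
    lift R fun x => ⟨of R x, LieSubalgebra.subset_lieSpan ⟨x, rfl⟩⟩
  have hg : S.incl.comp g = (LieHom.id : FreeLieAlgebra R X →ₗ⁅R⁆ FreeLieAlgebra R X) :=
    hom_ext fun x => by simp [g]
  refine eq_top_iff.mpr fun u _ => ?_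
  have hu : S.incl (g u) = u := LieHom.congr_fun hg u
  exact hu ▸ (g u).2

theorem Submodule.lie_mem_iSup {R L ι : Type*} [CommRing R] [LieRing L] [LieAlgebra R L] [Add ι]
    {p : ι → Submodule R L} (hp : ∀ i j, ∀ u ∈ p i, ∀ v ∈ p j, ⁅u, v⁆ ∈ p (i + j))
    {u v : L} (hu : u ∈ ⨆ i, p i) (hv : v ∈ ⨆ i, p i) : ⁅u, v⁆ ∈ ⨆ i, p i := by
  refine Submodule.iSup_induction p (motive := fun u => ⁅u, v⁆ ∈ ⨆ i, p i) hu
    (fun i u hu => ?_) (by simp) fun u₁ u₂ h₁ h₂ => by rw [add_lie]; exact add_mem h₁ h₂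
  refine Submodule.iSup_induction p (motive := fun v => ⁅u, v⁆ ∈ ⨆ i, p i) hv
    (fun j v hv => Submodule.mem_iSup_of_mem (i + j) (hp i j u hu v hv)) (by simp)
    fun v₁ v₂ h₁ h₂ => by rw [lie_add]; exact add_mem h₁ h₂

theorem iSupIndep.disjoint_iSup_ker {R M N ι : Type*} [Ring R] [AddCommGroup M] [Module R M]
    [AddCommGroup N] [Module R N] {p : ι → Submodule R M} {q : ι → Submodule R N}
    {f : M →ₗ[R] N} (hq : iSupIndep q) (hpq : ∀ i, (p i).map f ≤ q i)
    (hp : ∀ i, Disjoint (p i) (LinearMap.ker f)) :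
    Disjoint (⨆ i, p i) (LinearMap.ker f) := by
  refine Submodule.disjoint_def.mpr fun x hx hfx => ?_
  obtain ⟨c, hc, rfl⟩ := (Submodule.mem_iSup_iff_exists_finsupp p x).mp hx
  have hfc : ∀ i ∈ c.support, f (c i) = 0 := by
    refine (iSupIndep_iff_finsetSum_eq_zero_imp_eq_zero q).mp hq c.support (fun i => f (c i))
      (fun i _ => hpq i (Submodule.mem_map_of_mem (hc i))) ?_
    rw [← map_sum]
    exact hfx
  exact Finset.sum_eq_zero fun i hi => Submodule.disjoint_def.mp (hp i) _ (hc i) (hfc i hi)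

namespace FreeAlgebra

variable (K : Type*) [CommRing K] (Λ : Type*)

noncomputable def grade (n : ℕ) : Submodule K (FreeAlgebra K Λ) :=
  Submodule.span K (Set.range (ι K)) ^ n

theorem grade_eq_map (n : ℕ) :
    grade K Λ n = (LinearMap.range (TensorAlgebra.ι K) ^ n).map
      (TensorAlgebra.equivFreeAlgebra (Finsupp.basisSingleOne (R := K) (ι := Λ))).toLinearMap := by
  set e := TensorAlgebra.equivFreeAlgebra (Finsupp.basisSingleOne (R := K) (ι := Λ))
  have he : e.toLinearMap ∘ₗ TensorAlgebra.ι K = Finsupp.linearCombination K (ι K) :=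
    Finsupp.basisSingleOne.ext fun x => by
      simpa [e] using TensorAlgebra.equivFreeAlgebra_ι_apply Finsupp.basisSingleOne x
  have hpow := Submodule.map_pow (M := LinearMap.range (TensorAlgebra.ι K))
    (e : TensorAlgebra K (Λ →₀ K) →ₐ[K] FreeAlgebra K Λ) n
  rw [AlgEquiv.toAlgHom_toLinearMap] at hpow
  rw [grade, hpow, ← LinearMap.range_comp, he, Finsupp.range_linearCombination]

theorem iSupIndep_grade : iSupIndep (grade K Λ) := by
  have hT := (DirectSum.Decomposition.isInternal _ : DirectSum.IsInternal
    (fun n : ℕ => LinearMap.range (TensorAlgebra.ι K (M := Λ →₀ K)) ^ n)).submodule_iSupIndep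
  convert hT.map_orderIso (Submodule.orderIsoMapComap
    (TensorAlgebra.equivFreeAlgebra (Finsupp.basisSingleOne (R := K) (ι := Λ))).toLinearEquiv)
    using 1
  exact funext (grade_eq_map K Λ)

end FreeAlgebra

namespace MagnusWitt

variable (K : Type*) [CommRing K] (Λ : Type*)

noncomputable def liftAd : FreeAlgebra K Λ →ₐ[K] Module.End K (FreeLieAlgebra K Λ) :=
  FreeAlgebra.lift K fun x => ad K _ (of K x)

/-- A word `x₁ ⋯ xₙ` sends `(1, 0)` to `(0, ⁅x₁, ⁅x₂, …, xₙ⁆⁆)`; the `K` factor carries the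
constant term, which the generators kill. -/
noncomputable def dynkinRep : FreeAlgebra K Λ →ₐ[K] Module.End K (K × FreeLieAlgebra K Λ) :=
  FreeAlgebra.lift K fun x =>
    LinearMap.inr K K _ ∘ₗ (LinearMap.toSpanSingleton K _ (of K x)).coprod (ad K _ (of K x))

noncomputable def dynkin : FreeAlgebra K Λ →ₗ[K] FreeLieAlgebra K Λ :=
  LinearMap.snd K K _ ∘ₗ LinearMap.applyₗ (1, 0) ∘ₗ (dynkinRep K Λ).toLinearMap

/-- Homogeneity of degree `n`, with the Dynkin–Specht–Wever identity built in: it does not follow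
from `ι w ∈ grade n` until `ι` is known to be injective. -/
noncomputable def lieGrade (n : ℕ) : Submodule K (FreeLieAlgebra K Λ) :=
  (FreeAlgebra.grade K Λ n).comap (iotaLie K Λ : FreeLieAlgebra K Λ →ₗ[K] FreeAlgebra K Λ) ⊓
    LinearMap.eqLocus (dynkin K Λ ∘ₗ (iotaLie K Λ : FreeLieAlgebra K Λ →ₗ[K] FreeAlgebra K Λ))
      ((n : K) • LinearMap.id)

variable {K Λ}

theorem iotaLie_of (x : Λ) : iotaLie K Λ (of K x) = FreeAlgebra.ι K x :=
  lift_of_apply _ _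

theorem iotaLie_lie (u v : FreeLieAlgebra K Λ) :
    iotaLie K Λ ⁅u, v⁆ = iotaLie K Λ u * iotaLie K Λ v - iotaLie K Λ v * iotaLie K Λ u := by
  rw [LieHom.map_lie, Ring.lie_def]

theorem liftAd_iotaLie (u : FreeLieAlgebra K Λ) : liftAd K Λ (iotaLie K Λ u) = ad K _ u := by
  have h : (liftAd K Λ).toLieHom.comp (iotaLie K Λ) = ad K _ :=
    hom_ext fun x => by simp [liftAd, iotaLie_of]
  exact LieHom.congr_fun h u

theorem algebraMapInv_iotaLie (u : FreeLieAlgebra K Λ) :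
    FreeAlgebra.algebraMapInv (iotaLie K Λ u) = 0 := by
  have h : FreeAlgebra.algebraMapInv.toLieHom.comp (iotaLie K Λ) = 0 :=
    hom_ext fun x => by simp [FreeAlgebra.algebraMapInv, iotaLie_of]
  exact LieHom.congr_fun h u

theorem dynkin_apply (a : FreeAlgebra K Λ) : dynkin K Λ a = (dynkinRep K Λ a (1, 0)).2 :=
  rfl

theorem dynkinRep_apply_zero_prod (a : FreeAlgebra K Λ) (w : FreeLieAlgebra K Λ) :
    dynkinRep K Λ a (0, w) = (0, liftAd K Λ a w) := by
  induction a using FreeAlgebra.induction generalizing w with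
  | grade0 c => simp [Algebra.algebraMap_eq_smul_one]
  | grade1 x => simp [dynkinRep, liftAd]
  | mul a b ha hb => simp [hb, ha]
  | add a b ha hb => simp [ha, hb]

theorem fst_dynkinRep (a : FreeAlgebra K Λ) (p : K × FreeLieAlgebra K Λ) :
    (dynkinRep K Λ a p).1 = FreeAlgebra.algebraMapInv a * p.1 := by
  induction a using FreeAlgebra.induction generalizing p with
  | grade0 c => simp [Algebra.algebraMap_eq_smul_one]
  | grade1 x => simp [dynkinRep, FreeAlgebra.algebraMapInv]
  | mul a b ha hb => simp [ha, hb, mul_assoc]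
  | add a b ha hb => simp [ha, hb, add_mul]

theorem dynkin_mul (a b : FreeAlgebra K Λ) :
    dynkin K Λ (a * b) =
      FreeAlgebra.algebraMapInv b • dynkin K Λ a + liftAd K Λ a (dynkin K Λ b) := by
  have hb : dynkinRep K Λ b (1, 0) = FreeAlgebra.algebraMapInv b • (1, 0) + (0, dynkin K Λ b) :=
    Prod.ext (by simp [fst_dynkinRep]) (by simp [dynkin_apply])
  rw [dynkin_apply, map_mul, Module.End.mul_apply, hb, map_add, map_smul,
    dynkinRep_apply_zero_prod]
  rfl

theorem dynkin_iotaLie_of (x : Λ) : dynkin K Λ (iotaLie K Λ (of K x)) = of K x := by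
  simp [dynkin, dynkinRep, iotaLie_of]

theorem dynkin_iotaLie_lie (u v : FreeLieAlgebra K Λ) :
    dynkin K Λ (iotaLie K Λ ⁅u, v⁆) =
      ⁅u, dynkin K Λ (iotaLie K Λ v)⁆ - ⁅v, dynkin K Λ (iotaLie K Λ u)⁆ := by
  simp only [iotaLie_lie, map_sub, dynkin_mul, algebraMapInv_iotaLie, zero_smul, zero_add,
    liftAd_iotaLie, ad_apply]

theorem mem_lieGrade {n : ℕ} {w : FreeLieAlgebra K Λ} :
    w ∈ lieGrade K Λ n ↔
      iotaLie K Λ w ∈ FreeAlgebra.grade K Λ n ∧ dynkin K Λ (iotaLie K Λ w) = (n : K) • w :=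
  Iff.rfl

theorem of_mem_lieGrade_one (x : Λ) : of K x ∈ lieGrade K Λ 1 := by
  rw [mem_lieGrade, dynkin_iotaLie_of, iotaLie_of, FreeAlgebra.grade, pow_one, Nat.cast_one,
    one_smul]
  exact ⟨Submodule.subset_span ⟨x, rfl⟩, rfl⟩

theorem lie_mem_lieGrade {p q : ℕ} {u v : FreeLieAlgebra K Λ} (hu : u ∈ lieGrade K Λ p)
    (hv : v ∈ lieGrade K Λ q) : ⁅u, v⁆ ∈ lieGrade K Λ (p + q) := by
  rw [mem_lieGrade] at *
  refine ⟨?_, ?_⟩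
  · rw [iotaLie_lie]
    refine sub_mem ?_ ?_
    · rw [FreeAlgebra.grade, pow_add]; exact Submodule.mul_mem_mul hu.1 hv.1
    · rw [FreeAlgebra.grade, add_comm, pow_add]; exact Submodule.mul_mem_mul hv.1 hu.1
  · rw [dynkin_iotaLie_lie, hu.2, hv.2, lie_smul, lie_smul, ← lie_skew v u]
    simp only [smul_neg, sub_neg_eq_add, ← add_smul, Nat.cast_add, add_comm]

theorem iSup_lieGrade_eq_top : ⨆ n : ℕ+, lieGrade K Λ n = ⊤ := by
  let S : LieSubalgebra K (FreeLieAlgebra K Λ) :=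
    { toSubmodule := ⨆ n : ℕ+, lieGrade K Λ n
      lie_mem' := Submodule.lie_mem_iSup fun i j _ hu _ hv =>
        PNat.add_coe i j ▸ lie_mem_lieGrade hu hv }
  have hS : S = ⊤ := by
    rw [eq_top_iff, ← lieSpan_range_of, LieSubalgebra.lieSpan_le]
    rintro _ ⟨x, rfl⟩
    exact Submodule.mem_iSup_of_mem 1 (of_mem_lieGrade_one x)
  exact congrArg LieSubalgebra.toSubmodule hS

theorem disjoint_lieGrade_ker [Algebra ℚ K] (n : ℕ+) :
    Disjoint (lieGrade K Λ n)
      (LinearMap.ker (iotaLie K Λ : FreeLieAlgebra K Λ →ₗ[K] FreeAlgebra K Λ)) := by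
  refine Submodule.disjoint_def.mpr fun w hw hιw => ?_
  have hn : IsUnit ((n : ℕ) : K) := by
    simpa using (isUnit_iff_ne_zero.mpr
      (Nat.cast_ne_zero.mpr n.ne_zero : ((n : ℕ) : ℚ) ≠ 0)).map (algebraMap ℚ K)
  have hnw : ((n : ℕ) : K) • w = 0 := by
    rw [← (mem_lieGrade.mp hw).2, show iotaLie K Λ w = 0 from hιw, map_zero]
  exact hn.smul_eq_zero.mp hnw

end MagnusWitt

/-- (Magnus–Witt theorem over ℚ-algebras.) The canonical Lie algebra morphism
`ι : FreeLieAlgebra K Λ → FreeAlgebra K Λ` is injective. -/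
theorem magnus_witt (K : Type*) [CommRing K] [Algebra ℚ K] (Λ : Type*) :
    Function.Injective (iotaLie K Λ) := by
  have h := ((FreeAlgebra.iSupIndep_grade K Λ).comp PNat.coe_injective)
    |>.disjoint_iSup_ker (p := fun n : ℕ+ => MagnusWitt.lieGrade K Λ n)
      (fun _ => Submodule.map_le_iff_le_comap.mpr inf_le_left)
      MagnusWitt.disjoint_lieGrade_ker
  rw [MagnusWitt.iSup_lieGrade_eq_top, top_disjoint, LinearMap.ker_eq_bot] at h
  exact h
end

section
/- (Dynkin's formula for the Baker–Campbell–Hausdorff series, in homogeneous components.) For every integer m ≥ 1, the following identity holds in FreeAlgebra ℚ (Fin 2): ∑_{k=1}^{m} ((−1)^{k−1}/k) ∑_{(p,q)} (∏_{i=1}^{k} 1/(p_i!·q_i!)) · W(p,q) = (1/m) · ∑_{k=1}^{m} ((−1)^{k−1}/k) ∑_{(p,q)} (∏_{i=1}^{k} 1/(p_i!·q_i!)) · L(p,q), where in both sums (p,q) ranges over all pairs of tuples p, q : {1,…,k} → ℕ with p_i + q_i ≥ 1 for every i and ∑_{i=1}^{k}(p_i + q_i) = m. -/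
/-- The generator `X` of `FreeAlgebra ℚ (Fin 2)`. -/
noncomputable def Xg : FreeAlgebra ℚ (Fin 2) := FreeAlgebra.ι ℚ 0

/-- The generator `Y` of `FreeAlgebra ℚ (Fin 2)`. -/
noncomputable def Yg : FreeAlgebra ℚ (Fin 2) := FreeAlgebra.ι ℚ 1

/-- The associative monomial `W(p,q) = X^{p₁} Y^{q₁} ⋯ X^{p_k} Y^{q_k}`. -/
noncomputable def bchWord (k : ℕ) (pq : Fin k → ℕ × ℕ) : FreeAlgebra ℚ (Fin 2) :=
  (List.ofFn fun i => Xg ^ (pq i).1 * Yg ^ (pq i).2).prod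

/-- The list consisting of `p₁` copies of `X`, then `q₁` copies of `Y`, …, then `p_k` copies
of `X`, then `q_k` copies of `Y`. -/
noncomputable def bchList (k : ℕ) (pq : Fin k → ℕ × ℕ) : List (FreeAlgebra ℚ (Fin 2)) :=
  (List.ofFn fun i => List.replicate (pq i).1 Xg ++ List.replicate (pq i).2 Yg).flatten

/-- The set of pairs of tuples `p, q : Fin k → ℕ` with `p i + q i ≥ 1` for all `i` and
`∑ i, (p i + q i) = m` (realized inside a large enough finite set of tuples). -/
noncomputable def bchIdx (k m : ℕ) : Finset (Fin k → ℕ × ℕ) :=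
  (Fintype.piFinset fun _ => Finset.range (m + 1) ×ˢ Finset.range (m + 1)).filter
    fun pq => (∀ i, 1 ≤ (pq i).1 + (pq i).2) ∧ ∑ i, ((pq i).1 + (pq i).2) = m

attribute [local instance] LieRing.ofAssociativeRing

/-!
On the free algebra, with coproduct `Δ x = x ⊗ 1 + 1 ⊗ x`, antipode `S` and the number operator
`N` (multiplication by the length of a word), the Dynkin operator `D = μ ∘ (N ⊗ S) ∘ Δ` sends every
nonempty word to its left-normed bracket and agrees with `N` on primitive elements.

The `m`-th component `E_m` of `log (exp X · exp Y)` is primitive: `exp X · exp Y` is group-like,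
and `log ((1 + u) (1 + v)) = log (1 + u) + log (1 + v)` for the commuting series
`u = (exp X exp Y - 1) ⊗ 1`, `v = 1 ⊗ (exp X exp Y - 1)`. In truncated form the latter says that
a polynomial in two commuting variables has no monomials of degree `≤ m`, which follows from its
partial derivatives. Hence `D E_m = N E_m = m E_m`, which is Dynkin's formula.
-/

namespace FreeAlgebra

open TensorProduct MulOpposite

variable {R X : Type*} [CommRing R]

noncomputable def comul : FreeAlgebra R X →ₐ[R] FreeAlgebra R X ⊗[R] FreeAlgebra R X :=
  lift R fun x => ι R x ⊗ₜ 1 + 1 ⊗ₜ ι R x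

noncomputable def antipode : FreeAlgebra R X →ₗ[R] FreeAlgebra R X :=
  (opLinearEquiv R).symm.toLinearMap ∘ₗ (lift R fun x => op (-ι R x)).toLinearMap

/-- Algebra maps into dual numbers encode derivations: the `ε`-part of this one is `numberOp`. -/
noncomputable def toDualNumber :
    FreeAlgebra R X →ₐ[R] TrivSqZeroExt (FreeAlgebra R X) (FreeAlgebra R X) :=
  lift R fun x => TrivSqZeroExt.inl (ι R x) + TrivSqZeroExt.inr (ι R x)

noncomputable def numberOp : FreeAlgebra R X →ₗ[R] FreeAlgebra R X where
  toFun a := (toDualNumber a).snd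
  map_add' a b := by simp
  map_smul' r a := by simp

noncomputable def convolution (f g : FreeAlgebra R X →ₗ[R] FreeAlgebra R X) :
    FreeAlgebra R X →ₗ[R] FreeAlgebra R X :=
  LinearMap.mul' R _ ∘ₗ TensorProduct.map f g ∘ₗ comul.toLinearMap

noncomputable def dynkinOp : FreeAlgebra R X →ₗ[R] FreeAlgebra R X :=
  convolution numberOp antipode

@[simp] lemma comul_ι (x : X) : comul (ι R x) = ι R x ⊗ₜ 1 + 1 ⊗ₜ[R] ι R x := by
  simp [comul]

@[simp] lemma antipode_one : antipode (1 : FreeAlgebra R X) = 1 := by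
  simp [antipode]

@[simp] lemma antipode_ι (x : X) : antipode (ι R x) = -ι R x := by
  simp [antipode]

lemma antipode_mul (a b : FreeAlgebra R X) : antipode (a * b) = antipode b * antipode a := by
  simp [antipode]

@[simp] lemma fst_toDualNumber (a : FreeAlgebra R X) : (toDualNumber a).fst = a := by
  have : (TrivSqZeroExt.fstHom R (FreeAlgebra R X) (FreeAlgebra R X)).comp toDualNumber =
      AlgHom.id R (FreeAlgebra R X) :=
    hom_ext <| funext fun x => by simp [toDualNumber]
  exact DFunLike.congr_fun this a

lemma numberOp_mul (a b : FreeAlgebra R X) :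
    numberOp (a * b) = a * numberOp b + numberOp a * b := by
  simp [numberOp, TrivSqZeroExt.snd_mul]

@[simp] lemma numberOp_one : numberOp (1 : FreeAlgebra R X) = 0 := by
  simp [numberOp]

@[simp] lemma numberOp_ι (x : X) : numberOp (ι R x) = ι R x := by
  simp [numberOp, toDualNumber]

lemma convolution_apply (f g : FreeAlgebra R X →ₗ[R] FreeAlgebra R X) (a : FreeAlgebra R X) :
    convolution f g a = LinearMap.mul' R _ (TensorProduct.map f g (comul a)) := rfl

@[simp] lemma convolution_one (f g : FreeAlgebra R X →ₗ[R] FreeAlgebra R X) :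
    convolution f g 1 = f 1 * g 1 := by
  simp [convolution, Algebra.TensorProduct.one_def]

lemma convolution_id_antipode_ι_mul (x : X) (a : FreeAlgebra R X) :
    convolution LinearMap.id antipode (ι R x * a) =
      ⁅ι R x, convolution LinearMap.id antipode a⁆ := by
  simp only [convolution_apply, map_mul, comul_ι, Ring.lie_def]
  induction comul a using TensorProduct.induction_on with
  | zero => simp
  | tmul b c =>
    simp only [add_mul, Algebra.TensorProduct.tmul_mul_tmul, one_mul, map_add,
      map_tmul, LinearMap.mul'_apply, LinearMap.id_apply, antipode_mul, antipode_ι]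
    noncomm_ring
  | add s t hs ht => simp only [mul_add, map_add, hs, ht]; noncomm_ring

lemma dynkinOp_ι_mul (x : X) (a : FreeAlgebra R X) :
    dynkinOp (ι R x * a) =
      ι R x * convolution LinearMap.id antipode a + ⁅ι R x, dynkinOp a⁆ := by
  simp only [dynkinOp, convolution_apply, map_mul, comul_ι, Ring.lie_def]
  induction comul a using TensorProduct.induction_on with
  | zero => simp
  | tmul b c =>
    simp only [add_mul, Algebra.TensorProduct.tmul_mul_tmul, one_mul, map_add,
      map_tmul, LinearMap.mul'_apply, LinearMap.id_apply, antipode_mul, antipode_ι,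
      numberOp_mul, numberOp_ι]
    noncomm_ring
  | add s t hs ht => simp only [mul_add, map_add, hs, ht]; noncomm_ring

lemma convolution_id_antipode_list_prod (x : X) (l : List X) :
    convolution LinearMap.id antipode ((x :: l).map (ι R)).prod = 0 := by
  induction l generalizing x with
  | nil =>
    rw [List.map_singleton, List.prod_singleton, ← mul_one (ι R x), convolution_id_antipode_ι_mul]
    simp [Ring.lie_def]
  | cons y l ih => rw [List.map_cons, List.prod_cons, convolution_id_antipode_ι_mul, ih, lie_zero]

lemma dynkinOp_list_prod (x : X) (l : List X) :
    dynkinOp ((x :: l).map (ι R)).prod = bracketL ((x :: l).map (ι R)) := by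
  induction l generalizing x with
  | nil =>
    rw [List.map_singleton, List.prod_singleton, bracketL, ← mul_one (ι R x), dynkinOp_ι_mul]
    simp [dynkinOp]
  | cons y l ih =>
    rw [List.map_cons, List.prod_cons, dynkinOp_ι_mul, ih, convolution_id_antipode_list_prod,
      mul_zero, zero_add]
    rfl

lemma numberOp_list_prod (l : List X) :
    numberOp (l.map (ι R)).prod = l.length • (l.map (ι R)).prod := by
  induction l with
  | nil => simp
  | cons x l ih =>
    rw [List.map_cons, List.prod_cons, numberOp_mul, ih, numberOp_ι, List.length_cons,
      mul_smul_comm, succ_nsmul]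

lemma dynkinOp_eq_numberOp_of_comul {a : FreeAlgebra R X}
    (ha : comul a = a ⊗ₜ 1 + 1 ⊗ₜ a) : dynkinOp a = numberOp a := by
  simp [dynkinOp, convolution_apply, ha]

end FreeAlgebra

section LogOneAddTrunc

variable {A : Type*} [Ring A] [Algebra ℚ A]

noncomputable def logOneAddTrunc (m : ℕ) (a : A) : A :=
  ∑ k ∈ Finset.Icc 1 m, ((-1 : ℚ) ^ (k - 1) / k) • a ^ k

lemma logOneAddTrunc_succ (m : ℕ) (a : A) :
    logOneAddTrunc (m + 1) a = logOneAddTrunc m a + ((-1 : ℚ) ^ m / (m + 1 : ℕ)) • a ^ (m + 1) := by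
  rw [logOneAddTrunc, Finset.sum_Icc_succ_top (by omega), Nat.add_sub_cancel]
  rfl

@[simp] lemma logOneAddTrunc_zero (m : ℕ) : logOneAddTrunc m (0 : A) = 0 :=
  Finset.sum_eq_zero fun k hk => by
    rw [zero_pow (by have := (Finset.mem_Icc.mp hk).1; omega), smul_zero]

lemma map_logOneAddTrunc {B F : Type*} [Ring B] [Algebra ℚ B] [FunLike F A B] [RingHomClass F A B]
    (f : F) (m : ℕ) (a : A) : f (logOneAddTrunc m a) = logOneAddTrunc m (f a) := by
  simp only [logOneAddTrunc, map_sum, map_rat_smul, map_pow]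

end LogOneAddTrunc

lemma derivation_logOneAddTrunc {A : Type*} [CommRing A] [Algebra ℚ A] (D : Derivation ℚ A A)
    (m : ℕ) (a : A) :
    D (logOneAddTrunc m a) = (∑ j ∈ Finset.range m, (-a) ^ j) * D a := by
  induction m with
  | zero => simp [logOneAddTrunc]
  | succ m ih =>
    have hm : ((m + 1 : ℕ) : ℚ) ≠ 0 := by positivity
    rw [logOneAddTrunc_succ, map_add, ih, Finset.sum_range_succ, add_mul, D.map_smul,
      Derivation.leibniz_pow, Nat.add_sub_cancel, ← Nat.cast_smul_eq_nsmul ℚ, smul_smul,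
      div_mul_cancel₀ _ hm, smul_eq_mul, Algebra.smul_def, map_pow, map_neg, map_one, neg_pow a,
      mul_assoc]

namespace MvPowerSeries

open Finsupp

lemma le_order_of_le_order_pderiv {σ R : Type*} [CommRing R] [NoZeroDivisors R] [CharZero R]
    {f : MvPowerSeries σ R} {n : ℕ} (hf : constantCoeff f = 0)
    (h : ∀ i, (n : ℕ∞) ≤ (pderiv R i f).order) : (n + 1 : ℕ) ≤ f.order := by
  refine nat_le_order fun d hd => ?_
  rcases eq_or_ne d 0 with rfl | hd0
  · simpa using hf
  obtain ⟨i, hi⟩ : ∃ i, d i ≠ 0 := by simpa [Finsupp.ext_iff] using hd0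
  obtain ⟨e, rfl⟩ : ∃ e, d = e + single i 1 :=
    ⟨d - single i 1, (tsub_add_cancel_of_le (single_le_iff.mpr (by omega))).symm⟩
  have he : ((degree e : ℕ) : ℕ∞) < (pderiv R i f).order := by
    refine lt_of_lt_of_le ?_ (h i)
    simp only [map_add, degree_single] at hd
    exact_mod_cast (by omega : degree e < n)
  have := coeff_pderiv f e (i := i)
  rw [coeff_of_lt_order he] at this
  exact (mul_eq_zero.mp this.symm).resolve_right (Nat.cast_add_one_ne_zero _)

lemma le_order_sub {σ R : Type*} [Ring R] {f g : MvPowerSeries σ R} {n : ℕ}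
    (hf : (n : ℕ∞) ≤ f.order) (hg : (n : ℕ∞) ≤ g.order) : (n : ℕ∞) ≤ (f - g).order :=
  nat_le_order fun d hd => by
    rw [map_sub, coeff_of_lt_order (lt_of_lt_of_le (by exact_mod_cast hd) hf),
      coeff_of_lt_order (lt_of_lt_of_le (by exact_mod_cast hd) hg), sub_self]

lemma le_order_pderiv_logOneAddTrunc {σ : Type*} {i j : σ} (hij : i ≠ j) (m : ℕ) :
    (m : ℕ∞) ≤ (pderiv ℚ i (logOneAddTrunc m (X i + X j + X i * X j) - logOneAddTrunc m (X i) -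
      logOneAddTrunc m (X j) : MvPowerSeries σ ℚ)).order := by
  set x : MvPowerSeries σ ℚ := X i
  set y : MvPowerSeries σ ℚ := X j
  set w := x + y + x * y
  have hGw := mul_neg_geom_sum (-w) m
  have hGx := mul_neg_geom_sum (-x) m
  -- `∂ᵢ log (1 + w) = (1 + y) / (1 + w) = ∂ᵢ log (1 + x)`, up to the truncation errors
  have key : (1 + w) * pderiv ℚ i (logOneAddTrunc m w - logOneAddTrunc m x - logOneAddTrunc m y) =
      (1 + y) * ((-x) ^ m - (-w) ^ m) := by
    simp only [map_sub, derivation_logOneAddTrunc, w, map_add, Derivation.leibniz, x, y,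
      pderiv_X_self, pderiv_X_of_ne hij.symm]
    linear_combination (1 + y) * hGw - (1 + y) * hGx
  have hw : constantCoeff w = 0 := by simp [w, x, y]
  have hx : constantCoeff x = 0 := by simp [x]
  have hinv : (1 + w)⁻¹ * (1 + w) = 1 := MvPowerSeries.inv_mul_cancel _ (by simp [hw])
  calc (m : ℕ∞) = 0 + (0 + m) := by simp
    _ ≤ ((1 + w)⁻¹).order + ((1 + y).order + ((-x) ^ m - (-w) ^ m).order) := by
      gcongr
      · exact zero_le
      · exact zero_le
      · exact le_order_sub (le_order_pow_of_constantCoeff_eq_zero m (by simp [hx]))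
          (le_order_pow_of_constantCoeff_eq_zero m (by simp [hw]))
    _ ≤ ((1 + w)⁻¹ * ((1 + w) * pderiv ℚ i
          (logOneAddTrunc m w - logOneAddTrunc m x - logOneAddTrunc m y))).order := by
      rw [key]
      exact (add_le_add_right le_order_mul _).trans le_order_mul
    _ = _ := by rw [← mul_assoc, hinv, one_mul]

lemma le_order_logOneAddTrunc_add_add_mul_sub (m : ℕ) :
    ((m + 1 : ℕ) : ℕ∞) ≤ (logOneAddTrunc m (X 0 + X 1 + X 0 * X 1) - logOneAddTrunc m (X 0) -
      logOneAddTrunc m (X 1) : MvPowerSeries (Fin 2) ℚ).order := by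
  refine le_order_of_le_order_pderiv ?_ (Fin.forall_fin_two.mpr ⟨?_, ?_⟩)
  · simp only [map_sub, map_logOneAddTrunc, map_add, map_mul, constantCoeff_X, add_zero, mul_zero,
      logOneAddTrunc_zero, sub_self]
  · exact le_order_pderiv_logOneAddTrunc (by decide) m
  · rw [sub_right_comm, show (X 0 + X 1 + X 0 * X 1 : MvPowerSeries (Fin 2) ℚ) =
      X 1 + X 0 + X 1 * X 0 by ring]
    exact le_order_pderiv_logOneAddTrunc (by decide) m

end MvPowerSeries

open scoped IsMulCommutative in
lemma MvPolynomial.exists_algHom_X_eq {σ K A : Type*} [CommRing K] [Ring A] [Algebra K A]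
    (x : σ → A) (hx : ∀ i j, Commute (x i) (x j)) :
    ∃ φ : MvPolynomial σ K →ₐ[K] A, ∀ i, φ (X i) = x i := by
  have := Algebra.isMulCommutative_adjoin K (s := Set.range x) <| by
    rintro _ ⟨i, rfl⟩ _ ⟨j, rfl⟩
    exact hx i j
  exact ⟨(Algebra.adjoin K (Set.range x)).val.comp
    (aeval fun i => ⟨x i, Algebra.subset_adjoin ⟨i, rfl⟩⟩), fun i => by simp⟩

namespace PowerSeries

variable {σ K R : Type*} [CommRing K] [Ring R] [Algebra K R]

lemma degree_le_order_monomial (φ : MvPolynomial σ K →ₐ[K] R⟦X⟧)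
    (hφ : ∀ i, constantCoeff (φ (MvPolynomial.X i)) = 0) (d : σ →₀ ℕ) (c : K) :
    (d.degree : ℕ∞) ≤ (φ (MvPolynomial.monomial d c)).order := by
  induction d using Finsupp.induction with
  | zero => simp
  | single_add i k e _ _ ih =>
    rw [MvPolynomial.monomial_single_add, map_mul, map_pow, map_add, Finsupp.degree_single,
      Nat.cast_add]
    exact (add_le_add (le_order_pow_of_constantCoeff_eq_zero k (hφ i)) ih).trans (le_order_mul _ _)

lemma coeff_algHom_eq_zero (φ : MvPolynomial σ K →ₐ[K] R⟦X⟧)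
    (hφ : ∀ i, constantCoeff (φ (MvPolynomial.X i)) = 0) {P : MvPolynomial σ K} {m : ℕ}
    (hP : ∀ d : σ →₀ ℕ, d.degree ≤ m → P.coeff d = 0) : coeff m (φ P) = 0 := by
  rw [P.as_sum, map_sum, map_sum]
  refine Finset.sum_eq_zero fun d hd => coeff_of_lt_order _ ?_
  have : m < d.degree := by
    by_contra h
    exact MvPolynomial.mem_support_iff.mp hd (hP d (by omega))
  exact lt_of_lt_of_le (by exact_mod_cast this) (degree_le_order_monomial φ hφ d _)

/-- Truncated form of `log ((1 + u) (1 + v)) = log (1 + u) + log (1 + v)` for commuting `u, v`: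
the defect polynomial in `u, v` only has monomials of degree `> m`. -/
theorem coeff_logOneAddTrunc_add_add_mul {R : Type*} [Ring R] [Algebra ℚ R] {u v : R⟦X⟧}
    (huv : Commute u v) (hu : constantCoeff u = 0) (hv : constantCoeff v = 0) (m : ℕ) :
    coeff m (logOneAddTrunc m (u + v + u * v)) =
      coeff m (logOneAddTrunc m u) + coeff m (logOneAddTrunc m v) := by
  obtain ⟨φ, hφ⟩ := MvPolynomial.exists_algHom_X_eq (K := ℚ) ![u, v] <| by
    simp [Fin.forall_fin_two, huv, huv.symm, Commute.refl]
  set P : MvPolynomial (Fin 2) ℚ := logOneAddTrunc m (.X 0 + .X 1 + .X 0 * .X 1) -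
    logOneAddTrunc m (.X 0) - logOneAddTrunc m (.X 1)
  have hP : ∀ d : Fin 2 →₀ ℕ, d.degree ≤ m → P.coeff d = 0 := fun d hd => by
    have hcoe : (P : MvPowerSeries (Fin 2) ℚ) = logOneAddTrunc m (.X 0 + .X 1 + .X 0 * .X 1) -
        logOneAddTrunc m (.X 0) - logOneAddTrunc m (.X 1) := by
      rw [← MvPolynomial.coeToMvPowerSeries.ringHom_apply]
      simp only [P, map_sub, map_add, map_mul, map_logOneAddTrunc,
        MvPolynomial.coeToMvPowerSeries.ringHom_apply, MvPolynomial.coe_X]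
    rw [← MvPolynomial.coeff_coe, hcoe]
    refine MvPowerSeries.coeff_of_lt_order (lt_of_lt_of_le ?_
      (MvPowerSeries.le_order_logOneAddTrunc_add_add_mul_sub m))
    exact_mod_cast Nat.lt_succ_of_le hd
  have h := coeff_algHom_eq_zero φ (by simp [Fin.forall_fin_two, hφ, hu, hv]) hP
  simp only [P, map_sub, map_add, map_mul, map_logOneAddTrunc, hφ] at h
  simpa [sub_sub, sub_eq_zero] using h

open TensorProduct Algebra.TensorProduct

lemma commute_of_coeff_commute {S : Type*} [Semiring S] {φ ψ : S⟦X⟧}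
    (h : ∀ i j, Commute (coeff i φ) (coeff j ψ)) : Commute φ ψ := by
  ext n
  rw [coeff_mul, coeff_mul]
  conv_rhs => rw [← Finset.HasAntidiagonal.map_swap_antidiagonal, Finset.sum_map]
  exact Finset.sum_congr rfl fun p _ => (h p.1 p.2).eq

section Exp

variable {A : Type*} [Ring A] [Algebra ℚ A]

noncomputable def expSeries (a : A) : A⟦X⟧ :=
  mk fun n => ((1 : ℚ) / n.factorial) • a ^ n

lemma expSeries_add {a b : A} (h : Commute a b) :
    expSeries (a + b) = expSeries a * expSeries b := by
  ext n
  rw [coeff_mul, expSeries, coeff_mk, h.add_pow, Finset.Nat.sum_antidiagonal_eq_sum_range_succ_mk,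
    Finset.smul_sum]
  refine Finset.sum_congr rfl fun i hi => ?_
  have hin : i ≤ n := Nat.lt_succ_iff.mp (Finset.mem_range.mp hi)
  simp only [expSeries, coeff_mk]
  rw [smul_mul_smul_comm, (Nat.commute_cast (a ^ i * b ^ (n - i)) (n.choose i)).eq, ← nsmul_eq_mul,
    ← Nat.cast_smul_eq_nsmul ℚ, smul_smul, div_mul_div_comm, one_mul, Nat.cast_choose ℚ hin]
  field_simp

lemma map_expSeries {B : Type*} [Ring B] [Algebra ℚ B] (f : A →+* B) (a : A) :
    map f (expSeries a) = expSeries (f a) := by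
  ext n
  simp [expSeries, map_rat_smul]

end Exp

section GroupLike

variable {K A : Type*} [CommRing K] [Ring A] [Algebra K A]

def IsGroupLike (Δ : A →ₐ[K] A ⊗[K] A) (g : A⟦X⟧) : Prop :=
  map Δ.toRingHom g = map (includeLeft : A →ₐ[K] A ⊗[K] A).toRingHom g *
    map (includeRight : A →ₐ[K] A ⊗[K] A).toRingHom g

lemma commute_map_includeLeft_map_includeRight (g h : A⟦X⟧) :
    Commute (map (includeLeft : A →ₐ[K] A ⊗[K] A).toRingHom g)
      (map (includeRight : A →ₐ[K] A ⊗[K] A).toRingHom h) :=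
  commute_of_coeff_commute fun i j => by
    simp [Commute, SemiconjBy, tmul_mul_tmul]

lemma IsGroupLike.mul {Δ : A →ₐ[K] A ⊗[K] A} {g h : A⟦X⟧} (hg : IsGroupLike Δ g)
    (hh : IsGroupLike Δ h) : IsGroupLike Δ (g * h) := by
  simp only [IsGroupLike, map_mul] at *
  rw [hg, hh, (commute_map_includeLeft_map_includeRight h g).symm.mul_mul_mul_comm]

end GroupLike

theorem comul_coeff_logOneAddTrunc {A : Type*} [Ring A] [Algebra ℚ A] {Δ : A →ₐ[ℚ] A ⊗[ℚ] A}
    {g : A⟦X⟧} (hg : IsGroupLike Δ g) (hg1 : constantCoeff g = 1) (m : ℕ) :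
    Δ (coeff m (logOneAddTrunc m (g - 1))) =
      coeff m (logOneAddTrunc m (g - 1)) ⊗ₜ 1 + 1 ⊗ₜ coeff m (logOneAddTrunc m (g - 1)) := by
  set u := map (includeLeft : A →ₐ[ℚ] A ⊗[ℚ] A).toRingHom (g - 1)
  set v := map (includeRight : A →ₐ[ℚ] A ⊗[ℚ] A).toRingHom (g - 1)
  have huv : map Δ.toRingHom (g - 1) = u + v + u * v := by
    have hΔ : map Δ.toRingHom g = _ := hg
    simp only [u, v, map_sub, map_one, hΔ]
    noncomm_ring
  have hg0 : constantCoeff (g - 1) = 0 := by rw [map_sub, hg1, map_one, sub_self]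
  have hmap (f : A →+* A ⊗[ℚ] A) : constantCoeff (map f (g - 1)) = 0 := by
    rw [← coeff_zero_eq_constantCoeff_apply, coeff_map, coeff_zero_eq_constantCoeff_apply, hg0,
      map_zero]
  have key := coeff_logOneAddTrunc_add_add_mul (commute_map_includeLeft_map_includeRight _ _)
    (hmap _) (hmap _) m
  rw [← huv] at key
  simpa only [u, v, ← map_logOneAddTrunc, coeff_map, AlgHom.toRingHom_eq_coe, RingHom.coe_coe,
    includeLeft_apply, includeRight_apply] using key

end PowerSeries

lemma List.prod_ofFn_smul {R A : Type*} [CommSemiring R] [Semiring A] [Algebra R A] {k : ℕ}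
    (c : Fin k → R) (a : Fin k → A) :
    (List.ofFn fun i => c i • a i).prod = (∏ i, c i) • (List.ofFn a).prod := by
  induction k with
  | zero => simp
  | succ k ih => simp [List.ofFn_succ, Fin.prod_univ_succ, ih, mul_comm (c 0), mul_smul]

section BchIndex

open Finset

lemma mem_bchIdx {k m : ℕ} {pq : Fin k → ℕ × ℕ} :
    pq ∈ bchIdx k m ↔ (∀ i, 1 ≤ (pq i).1 + (pq i).2) ∧ ∑ i, ((pq i).1 + (pq i).2) = m := by
  refine ⟨fun h => (mem_filter.mp h).2, fun h => mem_filter.mpr ⟨?_, h⟩⟩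
  refine Fintype.mem_piFinset.mpr fun i => mem_product.mpr ?_
  have : (pq i).1 + (pq i).2 ≤ m :=
    h.2 ▸ single_le_sum (f := fun i => (pq i).1 + (pq i).2) (by simp) (mem_univ i)
  exact ⟨mem_range.mpr (by omega), mem_range.mpr (by omega)⟩

lemma bchIdx_zero (m : ℕ) : bchIdx 0 m = if m = 0 then univ else ∅ := by
  ext pq
  split_ifs with hm <;> simp [mem_bchIdx, hm, eq_comm, Unique.eq_default pq]

lemma sum_bchIdx_succ {M : Type*} [AddCommMonoid M] (k m : ℕ) (F : (Fin (k + 1) → ℕ × ℕ) → M) :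
    ∑ pq ∈ bchIdx (k + 1) m, F pq =
      ∑ ab ∈ antidiagonal m, ∑ z ∈ antidiagonal ab.1 with 1 ≤ z.1 + z.2,
        ∑ g ∈ bchIdx k ab.2, F (Fin.cons z g) := by
  rw [sum_sigma', sum_sigma']
  refine (sum_nbij' (fun x => Fin.cons x.1.2 x.2)
    (fun pq => ⟨⟨((pq 0).1 + (pq 0).2, ∑ i : Fin k, ((pq i.succ).1 + (pq i.succ).2)), pq 0⟩,
      Fin.tail pq⟩)
    ?_ ?_ ?_ ?_ ?_).symm
  · rintro ⟨⟨ab, z⟩, g⟩ hx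
    simp only [mem_sigma, HasAntidiagonal.mem_antidiagonal, mem_filter, mem_bchIdx] at hx
    obtain ⟨⟨hab, hz, hz1⟩, hg1, hg2⟩ := hx
    simp only [mem_bchIdx, Fin.forall_fin_succ, Fin.sum_univ_succ, Fin.cons_zero,
      Fin.cons_succ]
    exact ⟨⟨hz1, hg1⟩, by omega⟩
  · intro pq hpq
    simp only [mem_bchIdx, Fin.forall_fin_succ, Fin.sum_univ_succ] at hpq
    simp only [mem_sigma, HasAntidiagonal.mem_antidiagonal, mem_filter, mem_bchIdx]
    exact ⟨⟨hpq.2, trivial, hpq.1.1⟩, hpq.1.2, rfl⟩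
  · rintro ⟨⟨ab, z⟩, g⟩ hx
    simp only [mem_sigma, HasAntidiagonal.mem_antidiagonal, mem_filter, mem_bchIdx] at hx
    obtain ⟨⟨hab, hz, -⟩, -, hg2⟩ := hx
    simp only [Fin.cons_zero, Fin.tail_cons, Fin.cons_succ, hz, hg2]
  · intro pq _
    exact Fin.cons_self_tail pq
  · intro x _
    rfl

lemma coeff_pow_eq_sum_bchIdx {A : Type*} [Ring A] (f : ℕ × ℕ → A) {φ : PowerSeries A}
    (hφ : ∀ n, PowerSeries.coeff n φ = ∑ z ∈ antidiagonal n with 1 ≤ z.1 + z.2, f z) (k m : ℕ) :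
    PowerSeries.coeff m (φ ^ k) = ∑ pq ∈ bchIdx k m, (List.ofFn fun i => f (pq i)).prod := by
  induction k generalizing m with
  | zero => by_cases hm : m = 0 <;> simp [bchIdx_zero, PowerSeries.coeff_one, hm]
  | succ k ih =>
    rw [pow_succ', PowerSeries.coeff_mul, sum_bchIdx_succ]
    refine sum_congr rfl fun ab _ => ?_
    rw [hφ, ih, sum_mul_sum]
    refine sum_congr rfl fun z _ => sum_congr rfl fun g _ => ?_
    simp [List.ofFn_succ]

end BchIndex

section BCH

open FreeAlgebra PowerSeries Finset

def bchLetters (k : ℕ) (pq : Fin k → ℕ × ℕ) : List (Fin 2) :=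
  (List.ofFn fun i => List.replicate (pq i).1 0 ++ List.replicate (pq i).2 1).flatten

lemma bchList_eq_map (k : ℕ) (pq : Fin k → ℕ × ℕ) :
    bchList k pq = (bchLetters k pq).map (ι ℚ) := by
  simp [bchList, bchLetters, List.map_flatten, List.map_ofFn, Function.comp_def,
    List.map_replicate, Xg, Yg]

lemma bchWord_eq_prod (k : ℕ) (pq : Fin k → ℕ × ℕ) : bchWord k pq = (bchList k pq).prod := by
  simp [bchWord, bchList, List.prod_flatten, List.map_ofFn, Function.comp_def]

lemma length_bchLetters (k : ℕ) (pq : Fin k → ℕ × ℕ) :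
    (bchLetters k pq).length = ∑ i, ((pq i).1 + (pq i).2) := by
  simp [bchLetters, List.length_flatten, List.map_ofFn, Function.comp_def, List.sum_ofFn]

lemma numberOp_bchWord {k m : ℕ} {pq : Fin k → ℕ × ℕ} (h : pq ∈ bchIdx k m) :
    numberOp (bchWord k pq) = (m : ℚ) • bchWord k pq := by
  rw [bchWord_eq_prod, bchList_eq_map, numberOp_list_prod, length_bchLetters, (mem_bchIdx.mp h).2,
    Nat.cast_smul_eq_nsmul]

lemma dynkinOp_bchWord {k m : ℕ} (hm : m ≠ 0) {pq : Fin k → ℕ × ℕ} (h : pq ∈ bchIdx k m) :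
    dynkinOp (bchWord k pq) = bracketL (bchList k pq) := by
  obtain ⟨x, l, hl⟩ := List.exists_cons_of_ne_nil <| List.ne_nil_of_length_pos <| by
    rw [length_bchLetters, (mem_bchIdx.mp h).2]
    omega
  rw [bchWord_eq_prod, bchList_eq_map, hl, dynkinOp_list_prod]

lemma isGroupLike_expSeries_ι {X : Type*} (x : X) :
    IsGroupLike comul (expSeries (ι ℚ x)) := by
  have hcomm : Commute (ι ℚ x ⊗ₜ[ℚ] (1 : FreeAlgebra ℚ X)) (1 ⊗ₜ ι ℚ x) := by
    simp [Commute, SemiconjBy, Algebra.TensorProduct.tmul_mul_tmul]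
  simp only [IsGroupLike, map_expSeries, AlgHom.toRingHom_eq_coe, RingHom.coe_coe, comul_ι,
    expSeries_add hcomm, Algebra.TensorProduct.includeLeft_apply,
    Algebra.TensorProduct.includeRight_apply]

noncomputable def bchComponent (m : ℕ) : FreeAlgebra ℚ (Fin 2) :=
  ∑ k ∈ Finset.Icc 1 m, ((-1 : ℚ) ^ (k - 1) / k) •
    ∑ pq ∈ bchIdx k m,
      (∏ i, (1 : ℚ) / (((pq i).1.factorial : ℚ) * ((pq i).2.factorial : ℚ))) • bchWord k pq

lemma coeff_expSeries_mul_expSeries_sub_one (n : ℕ) :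
    coeff n (expSeries Xg * expSeries Yg - 1) = ∑ z ∈ antidiagonal n with 1 ≤ z.1 + z.2,
      ((1 : ℚ) / (z.1.factorial * z.2.factorial)) • (Xg ^ z.1 * Yg ^ z.2) := by
  rcases Nat.eq_zero_or_pos n with rfl | hn
  · simp [expSeries, filter_singleton]
  rw [filter_true_of_mem fun z hz => by rw [HasAntidiagonal.mem_antidiagonal] at hz; omega,
    map_sub, coeff_mul, coeff_one, if_neg hn.ne', sub_zero]
  refine sum_congr rfl fun z _ => ?_
  simp only [expSeries, coeff_mk, smul_mul_smul_comm, div_mul_div_comm, one_mul]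

lemma coeff_logOneAddTrunc_expSeries_mul_expSeries (m : ℕ) :
    coeff m (logOneAddTrunc m (expSeries Xg * expSeries Yg - 1)) = bchComponent m := by
  simp only [logOneAddTrunc, map_sum, coeff_smul, bchComponent,
    coeff_pow_eq_sum_bchIdx _ coeff_expSeries_mul_expSeries_sub_one, List.prod_ofFn_smul, bchWord]

lemma comul_bchComponent (m : ℕ) :
    comul (bchComponent m) = bchComponent m ⊗ₜ 1 + 1 ⊗ₜ bchComponent m := by
  rw [← coeff_logOneAddTrunc_expSeries_mul_expSeries]
  refine comul_coeff_logOneAddTrunc ((isGroupLike_expSeries_ι 0).mul (isGroupLike_expSeries_ι 1))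
    ?_ m
  simp [← coeff_zero_eq_constantCoeff_apply, coeff_mul, expSeries]

lemma numberOp_bchComponent (m : ℕ) : numberOp (bchComponent m) = (m : ℚ) • bchComponent m := by
  simp only [bchComponent, map_sum, map_smul, smul_sum]
  refine sum_congr rfl fun k _ => sum_congr rfl fun pq hpq => ?_
  rw [numberOp_bchWord hpq, smul_comm _ (m : ℚ) (bchWord k pq), smul_comm _ (m : ℚ)]

lemma dynkinOp_bchComponent (m : ℕ) :
    dynkinOp (bchComponent m) = ∑ k ∈ Finset.Icc 1 m, ((-1 : ℚ) ^ (k - 1) / k) •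
      ∑ pq ∈ bchIdx k m,
        (∏ i, (1 : ℚ) / (((pq i).1.factorial : ℚ) * ((pq i).2.factorial : ℚ))) •
          bracketL (bchList k pq) := by
  simp only [bchComponent, map_sum, map_smul]
  refine sum_congr rfl fun k hk => congrArg _ (sum_congr rfl fun pq hpq => ?_)
  rw [dynkinOp_bchWord (by have := (mem_Icc.mp hk); omega) hpq]

end BCH

theorem dynkin_BCH_formula_general (m : ℕ) :
    (∑ k ∈ Finset.Icc 1 m, ((-1 : ℚ) ^ (k - 1) / k) •
        ∑ pq ∈ bchIdx k m,
          (∏ i, (1 : ℚ) / (((pq i).1.factorial : ℚ) * ((pq i).2.factorial : ℚ))) •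
            bchWord k pq) =
      (1 / (m : ℚ)) •
        ∑ k ∈ Finset.Icc 1 m, ((-1 : ℚ) ^ (k - 1) / k) •
          ∑ pq ∈ bchIdx k m,
            (∏ i, (1 : ℚ) / (((pq i).1.factorial : ℚ) * ((pq i).2.factorial : ℚ))) •
              bracketL (bchList k pq) := by
  change bchComponent m = _
  rw [← dynkinOp_bchComponent, FreeAlgebra.dynkinOp_eq_numberOp_of_comul (comul_bchComponent m),
    numberOp_bchComponent, smul_smul]
  rcases eq_or_ne m 0 with rfl | hm
  · simp [bchComponent]
  · rw [one_div, inv_mul_cancel₀ (Nat.cast_ne_zero.mpr hm), one_smul]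

/-- (Dynkin's formula for the Baker–Campbell–Hausdorff series, in homogeneous components.)
The `m`-th homogeneous component of `log((exp X)(exp Y))` equals `1/m` times the same
expression with each word replaced by its left-iterated bracket. -/
theorem dynkin_BCH_formula (m : ℕ) (hm : 1 ≤ m) :
    (∑ k ∈ Finset.Icc 1 m, ((-1 : ℚ) ^ (k - 1) / k) •
        ∑ pq ∈ bchIdx k m,
          (∏ i, (1 : ℚ) / (((pq i).1.factorial : ℚ) * ((pq i).2.factorial : ℚ))) •
            bchWord k pq) =
      (1 / (m : ℚ)) •
        ∑ k ∈ Finset.Icc 1 m, ((-1 : ℚ) ^ (k - 1) / k) •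
          ∑ pq ∈ bchIdx k m,
            (∏ i, (1 : ℚ) / (((pq i).1.factorial : ℚ) * ((pq i).2.factorial : ℚ))) •
              bracketL (bchList k pq) :=
  dynkin_BCH_formula_general m
end

section
/- (Resolvent integral representation of β(x) = x/(e^x − 1).) For every real number x ≠ 0: x/(Real.exp x − 1) = 1 + ∫_{λ=0}^{1} (λ − 1)·(Real.exp x − 1)/(λ + (1 − λ)·Real.exp x) dλ, where the integral is over the interval [0,1] (note that λ + (1 − λ)·e^x > 0 for all λ ∈ [0,1]). -/
/-!
Since `(t - 1)(a - 1) = 1 - (a - (a - 1) t)` and `a - (a - 1) t = t + (1 - t) a`, the resolvent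
integrand is `(a - (a - 1) t)⁻¹ - 1`, and the substitution `u = a - (a - 1) t` gives
`∫₀¹ (a - (a - 1) t)⁻¹ dt = log a / (a - 1)`. Taking `a = eˣ` turns `log a / (a - 1)` into `β(x)`.
-/

open Real intervalIntegral

lemma resolvent_integrand_eq_inv_sub_one {a t : ℝ} (h : t + (1 - t) * a ≠ 0) :
    (t - 1) * (a - 1) / (t + (1 - t) * a) = (a - (a - 1) * t)⁻¹ - 1 := by
  have hden : a - (a - 1) * t = t + (1 - t) * a := by ring
  rw [hden, inv_eq_one_div, div_sub_one h]
  ring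

lemma integral_inv_sub_mul {a : ℝ} (ha : 0 < a) (ha1 : a ≠ 1) :
    ∫ t in (0 : ℝ)..1, (a - (a - 1) * t)⁻¹ = log a / (a - 1) := by
  rw [integral_comp_sub_mul (fun u => u⁻¹) (sub_ne_zero.mpr ha1), mul_one, mul_zero, sub_zero,
    sub_sub_cancel, integral_inv_of_pos one_pos ha, div_one, smul_eq_mul, inv_mul_eq_div]

lemma integral_resolvent_eq_log_div_sub_one {a : ℝ} (ha : 0 < a) (ha1 : a ≠ 1) :
    ∫ t in (0 : ℝ)..1, (t - 1) * (a - 1) / (t + (1 - t) * a) = log a / (a - 1) - 1 := by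
  have hpos : ∀ t ∈ Set.uIcc (0 : ℝ) 1, 0 < a - (a - 1) * t := by
    intro t ht
    obtain ⟨ht0, ht1⟩ : 0 ≤ t ∧ t ≤ 1 := by rwa [Set.uIcc_of_le zero_le_one] at ht
    nlinarith [mul_nonneg (sub_nonneg.mpr ht1) ha.le]
  have hintegrable : IntervalIntegrable (fun t => (a - (a - 1) * t)⁻¹) MeasureTheory.volume 0 1 :=
    (ContinuousOn.inv₀ (by fun_prop) fun t ht => (hpos t ht).ne').intervalIntegrable
  calc ∫ t in (0 : ℝ)..1, (t - 1) * (a - 1) / (t + (1 - t) * a)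
      = ∫ t in (0 : ℝ)..1, ((a - (a - 1) * t)⁻¹ - 1) :=
        integral_congr fun t ht => resolvent_integrand_eq_inv_sub_one
          (by linarith [hpos t ht] : t + (1 - t) * a ≠ 0)
    _ = log a / (a - 1) - 1 := by
        rw [integral_sub hintegrable intervalIntegrable_const, integral_inv_sub_mul ha ha1,
          integral_const, sub_zero, one_smul]

/-- (Resolvent integral representation of `β(x) = x/(eˣ - 1)`.)  For `x ≠ 0`,
`x/(eˣ - 1) = 1 + ∫₀¹ (t - 1)·(eˣ - 1)/(t + (1 - t)·eˣ) dt`. -/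
theorem beta_eq_resolvent_integral (x : ℝ) (hx : x ≠ 0) :
    x / (Real.exp x - 1) =
      1 + ∫ t in (0 : ℝ)..1, (t - 1) * (Real.exp x - 1) / (t + (1 - t) * Real.exp x) := by
  rw [integral_resolvent_eq_log_div_sub_one (exp_pos x) (exp_eq_one_iff x |>.not.mpr hx), log_exp]
  ring
end
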